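/- Let γ > 0 and a ∈ ℂ. For every entire function f : ℂ → ℂ one has ∫_ℂ |W_γ^a f(z)|² exp((z − conj(z))²/γ²) dA(z) = ∫_ℂ |f(z)|² exp((z − conj(z))²/γ²) dA(z) (as equality in [0,∞]), and W_γ^{−a}(W_γ^a f) = f. Consequently W_γ^a is an isometric bijection of the RBF space H_γ onto itself with inverse W_γ^{−a}. -/

import Mathlib

/-!
The modulus of the multiplier in `W_γ^a f` is `exp (2 (2 Im a Im z - (Im a)²) / γ²)`, so its square
is exactly the ratio `w(z - a) / w(z)` of the weights `w(z) = exp (-4 (Im z)² / γ²)`: the weighted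
integrand of `W_γ^a f` is the translate by `a` of that of `f`, and Lebesgue measure is
translation invariant. For the inverse, the two exponents cancel because `a * conj a = ‖a‖²`.
-/

open MeasureTheory Complex

/-- The RBF–Weyl operator
`W_γ^a f(z) = exp((a² − |a|²)/γ² + (2/γ²)·z·(conj a − a)) · f(z − a)`. -/
noncomputable def rbfWeyl (γ : ℝ) (a : ℂ) (f : ℂ → ℂ) (z : ℂ) : ℂ :=
  Complex.exp ((a ^ 2 - ((‖a‖ : ℝ) : ℂ) ^ 2) / (γ : ℂ) ^ 2 +
      (2 / (γ : ℂ) ^ 2) * z * ((starRingEnd ℂ) a - a)) * f (z - a)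

open ComplexConjugate

theorem rbfWeyl_exponent_re (γ : ℝ) (a z : ℂ) :
    ((a ^ 2 - ((‖a‖ : ℝ) : ℂ) ^ 2) / (γ : ℂ) ^ 2 +
      (2 / (γ : ℂ) ^ 2) * z * (conj a - a)).re =
      2 * (2 * a.im * z.im - a.im ^ 2) / γ ^ 2 := by
  rw [← mul_conj', ← ofReal_pow, add_re, div_ofReal_re, ← ofReal_ofNat, ← ofReal_div,
    mul_assoc, re_ofReal_mul]
  simp only [sub_re, mul_re, sub_im, conj_re, conj_im, pow_two]
  ring

theorem norm_rbfWeyl_sq_mul_weight (γ : ℝ) (a : ℂ) (f : ℂ → ℂ) (z : ℂ) :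
    ‖rbfWeyl γ a f z‖ ^ 2 * Real.exp (-(4 * z.im ^ 2) / γ ^ 2) =
      ‖f (z - a)‖ ^ 2 * Real.exp (-(4 * (z - a).im ^ 2) / γ ^ 2) := by
  rw [rbfWeyl, norm_mul, mul_pow, norm_exp, rbfWeyl_exponent_re, ← Real.exp_nat_mul,
    mul_right_comm, ← Real.exp_add, mul_comm]
  congr 2
  simp only [sub_im]
  ring

theorem rbfWeyl_neg_rbfWeyl (γ : ℝ) (a : ℂ) (f : ℂ → ℂ) :
    rbfWeyl γ (-a) (rbfWeyl γ a f) = f := by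
  funext z
  rw [rbfWeyl, rbfWeyl, sub_neg_eq_add, sub_neg_eq_add, add_sub_cancel_right, ← mul_assoc, ← exp_add]
  convert one_mul (f z)
  rw [← exp_zero, norm_neg, ← mul_conj', map_neg]
  congr 1
  ring

theorem lintegral_rbfWeyl_weighted (γ : ℝ) (a : ℂ) (f : ℂ → ℂ) :
    ∫⁻ z : ℂ, ENNReal.ofReal (‖rbfWeyl γ a f z‖ ^ 2 * Real.exp (-(4 * z.im ^ 2) / γ ^ 2)) =
      ∫⁻ z : ℂ, ENNReal.ofReal (‖f z‖ ^ 2 * Real.exp (-(4 * z.im ^ 2) / γ ^ 2)) := by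
  simp_rw [norm_rbfWeyl_sq_mul_weight]
  exact lintegral_sub_right_eq_self
    (fun z : ℂ => ENNReal.ofReal (‖f z‖ ^ 2 * Real.exp (-(4 * z.im ^ 2) / γ ^ 2))) a

theorem rbfWeyl_isometry_general (γ : ℝ) (a : ℂ) :
    (∀ f : ℂ → ℂ, Differentiable ℂ f →
      (∫⁻ z : ℂ, ENNReal.ofReal (‖rbfWeyl γ a f z‖ ^ 2 * Real.exp (-(4 * z.im ^ 2) / γ ^ 2))) =
        (∫⁻ z : ℂ, ENNReal.ofReal (‖f z‖ ^ 2 * Real.exp (-(4 * z.im ^ 2) / γ ^ 2)))) ∧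
    (∀ f : ℂ → ℂ, Differentiable ℂ f →
      rbfWeyl γ (-a) (rbfWeyl γ a f) = f) :=
  ⟨fun f _ => lintegral_rbfWeyl_weighted γ a f, fun f _ => rbfWeyl_neg_rbfWeyl γ a f⟩

theorem rbfWeyl_isometry (γ : ℝ) (hγ : 0 < γ) (a : ℂ) :
    (∀ f : ℂ → ℂ, Differentiable ℂ f →
      (∫⁻ z : ℂ, ENNReal.ofReal (‖rbfWeyl γ a f z‖ ^ 2 * Real.exp (-(4 * z.im ^ 2) / γ ^ 2))) =
        (∫⁻ z : ℂ, ENNReal.ofReal (‖f z‖ ^ 2 * Real.exp (-(4 * z.im ^ 2) / γ ^ 2)))) ∧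
    (∀ f : ℂ → ℂ, Differentiable ℂ f →
      rbfWeyl γ (-a) (rbfWeyl γ a f) = f) :=
  rbfWeyl_isometry_general γ a
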